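/- arXiv:2402.04035 — 2 statements merged into one kernel-verified Lean document; each statement's English description precedes it below -/
import Mathlib

section
/- Bicriteria-to-approximation reduction: let C′ be an (α,β)-bicriteria solution for (k,z)-clustering of X (cost at most α·φ_OPT using β centers), and interpret C′ as a multiset where each center c is repeated once per point of X assigned to it. If C is a γ-approximate k-element solution for (k,z)-clustering of this multiset, then C is a (4αγ)-approximate solution for (k,z)-clustering of X. -/
/-- distance of a point to a finite set of centers -/
noncomputable def dSet {X : Type*} [MetricSpace X] (x : X) (C : Finset X) : ℝ :=
  sInf ((fun c => dist x c) '' (C : Set X))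

/-- (k,z)-clustering cost of a set of centers -/
noncomputable def kzCost {X : Type*} [MetricSpace X] [Fintype X] (z : ℕ)
    (C : Finset X) : ℝ :=
  (∑ x : X, dSet x C ^ z) ^ ((1 : ℝ) / z)

/-- optimal (k,z)-clustering cost -/
noncomputable def kzOpt (X : Type*) [MetricSpace X] [Fintype X] (z k : ℕ) : ℝ :=
  sInf {r | ∃ C : Finset X, C.card = k ∧ r = kzCost z C}

lemma dSet_nonneg {X : Type*} [MetricSpace X] (x : X) (C : Finset X) : 0 ≤ dSet x C := by
  apply Real.sInf_nonneg
  rintro r ⟨c, _, rfl⟩; exact dist_nonneg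

lemma dSet_le {X : Type*} [MetricSpace X] (x : X) {C : Finset X} {c : X} (hc : c ∈ C) :
    dSet x C ≤ dist x c := by
  apply csInf_le ⟨0, by rintro r ⟨d, _, rfl⟩; exact dist_nonneg⟩
  exact ⟨c, by simpa using hc, rfl⟩

lemma dSet_triangle {X : Type*} [MetricSpace X] (x y : X) {C : Finset X} (hC : C.Nonempty) :
    dSet x C ≤ dist x y + dSet y C := by
  rw [← sub_le_iff_le_add']
  apply le_csInf (by simpa using hC)
  rintro r ⟨d, hd, rfl⟩
  have h1 := dSet_le x (C := C) (by simpa using hd : d ∈ C)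
  have h2 := dist_triangle x y d
  simp only at *
  linarith

lemma mink {X : Type*} [Fintype X] {z : ℕ} (hz : 1 ≤ z) (f g : X → ℝ)
    (hf : ∀ x, 0 ≤ f x) (hg : ∀ x, 0 ≤ g x) :
    (∑ x : X, (f x + g x) ^ z) ^ ((1 : ℝ) / z) ≤
      (∑ x : X, f x ^ z) ^ ((1 : ℝ) / z) + (∑ x : X, g x ^ z) ^ ((1 : ℝ) / z) := by
  have hp : (1 : ℝ) ≤ (z : ℝ) := by exact_mod_cast hz
  have := Real.Lp_add_le_of_nonneg (s := Finset.univ) (f := f) (g := g) (p := (z : ℝ)) hp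
    (fun i _ => hf i) (fun i _ => hg i)
  simpa only [← Real.rpow_natCast] using this

lemma rpow_inv_le {z : ℕ} {a b : ℝ} (ha : 0 ≤ a) (hab : a ≤ b) :
    a ^ ((1 : ℝ) / z) ≤ b ^ ((1 : ℝ) / z) :=
  Real.rpow_le_rpow ha hab (by positivity)

/-- Bicriteria-to-approximation reduction: let `C'` be an `(α,β)`-bicriteria
solution for `(k,z)`-clustering of `X` (cost at most `α·φ_OPT`), and interpret
`C'` as the multiset `{c x : x ∈ X}` where `c x` is the center of `C'` nearest
to `x`. If `C` is a `γ`-approximate `k`-element solution for `(k,z)`-clustering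
of this multiset, then `C` is a `4αγ`-approximate `(k,z)`-clustering of `X`. -/
theorem stmt_6 {X : Type*} [MetricSpace X] [Fintype X] [Nonempty X]
    (k z : ℕ) (hz : 1 ≤ z) (hk : 1 ≤ k) (hkX : k ≤ Fintype.card X)
    (α γ : ℝ) (hα : 1 ≤ α) (hγ : 1 ≤ γ)
    (C' : Finset X) (hC' : C'.Nonempty)
    (c : X → X) (hc : ∀ x : X, c x ∈ C' ∧ dist x (c x) = dSet x C')
    (hbi : kzCost z C' ≤ α * kzOpt X z k)
    (C : Finset X) (hCk : C.card = k)
    (hγapx : (∑ x : X, dSet (c x) C ^ z) ^ ((1 : ℝ) / z) ≤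
      γ * sInf {r | ∃ D : Finset X, D.card = k ∧
        r = (∑ x : X, dSet (c x) D ^ z) ^ ((1 : ℝ) / z)}) :
    kzCost z C ≤ 4 * α * γ * kzOpt X z k := by
  set A := kzCost z C' with hA
  set T := (∑ x : X, dSet (c x) C ^ z) ^ ((1 : ℝ) / z) with hT
  set S := {r | ∃ D : Finset X, D.card = k ∧
      r = (∑ x : X, dSet (c x) D ^ z) ^ ((1 : ℝ) / z)} with hS
  -- A as a sum of distances to assigned centers
  have hAeq : A = (∑ x : X, dist x (c x) ^ z) ^ ((1 : ℝ) / z) := by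
    rw [hA, kzCost]
    congr 1
    exact Finset.sum_congr rfl fun x _ => by rw [(hc x).2]
  have hSbd : BddBelow S := by
    refine ⟨0, ?_⟩
    rintro r ⟨D, _, rfl⟩
    exact Real.rpow_nonneg (Finset.sum_nonneg fun x _ => pow_nonneg (dSet_nonneg _ _) _) _
  -- Step 2: for any D of card k, proxy(D) ≤ A + kzCost z D
  have step2 : ∀ D : Finset X, D.card = k →
      (∑ x : X, dSet (c x) D ^ z) ^ ((1 : ℝ) / z) ≤ A + kzCost z D := by
    intro D hD
    have hDne : D.Nonempty := Finset.card_pos.mp (by omega)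
    have h1 : (∑ x : X, dSet (c x) D ^ z) ^ ((1 : ℝ) / z) ≤
        (∑ x : X, (dist x (c x) + dSet x D) ^ z) ^ ((1 : ℝ) / z) := by
      apply rpow_inv_le (Finset.sum_nonneg fun x _ => pow_nonneg (dSet_nonneg _ _) _)
      apply Finset.sum_le_sum
      intro x _
      apply pow_le_pow_left₀ (dSet_nonneg _ _)
      calc dSet (c x) D ≤ dist (c x) x + dSet x D := dSet_triangle _ _ hDne
        _ = dist x (c x) + dSet x D := by rw [dist_comm]
    calc _ ≤ _ := h1
      _ ≤ _ := by
        rw [hAeq, kzCost]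
        exact mink hz _ _ (fun x => dist_nonneg) (fun x => dSet_nonneg _ _)
  -- Step 3: sInf S ≤ A + kzOpt
  have hAnn : 0 ≤ A := by rw [hAeq]; positivity
  have hOptSet_ne : {r | ∃ D : Finset X, D.card = k ∧ r = kzCost z D}.Nonempty := by
    obtain ⟨D, _, hD⟩ := Finset.exists_subset_card_eq (s := (Finset.univ : Finset X)) (n := k) (by simpa using hkX)
    exact ⟨kzCost z D, D, hD, rfl⟩
  have hOpt_nn : 0 ≤ kzOpt X z k := by
    apply Real.sInf_nonneg
    rintro r ⟨D, _, rfl⟩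
    exact Real.rpow_nonneg (Finset.sum_nonneg fun x _ => pow_nonneg (dSet_nonneg _ _) _) _
  have step3 : sInf S ≤ A + kzOpt X z k := by
    rw [← sub_le_iff_le_add']
    rw [kzOpt]
    apply le_csInf hOptSet_ne
    rintro r ⟨D, hD, rfl⟩
    rw [sub_le_iff_le_add']
    calc sInf S ≤ (∑ x : X, dSet (c x) D ^ z) ^ ((1 : ℝ) / z) :=
          csInf_le hSbd ⟨D, hD, rfl⟩
      _ ≤ A + kzCost z D := step2 D hD
  -- Step 1: kzCost z C ≤ A + T
  have hCne : C.Nonempty := Finset.card_pos.mp (by omega)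
  have step1 : kzCost z C ≤ A + T := by
    have h1 : kzCost z C ≤
        (∑ x : X, (dist x (c x) + dSet (c x) C) ^ z) ^ ((1 : ℝ) / z) := by
      rw [kzCost]
      apply rpow_inv_le (Finset.sum_nonneg fun x _ => pow_nonneg (dSet_nonneg _ _) _)
      apply Finset.sum_le_sum
      intro x _
      apply pow_le_pow_left₀ (dSet_nonneg _ _)
      exact dSet_triangle _ _ hCne
    calc _ ≤ _ := h1
      _ ≤ _ := by
        rw [hAeq, hT]
        exact mink hz _ _ (fun x => dist_nonneg) (fun x => dSet_nonneg _ _)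
  -- combine
  have hTle : T ≤ γ * sInf S := hγapx
  have hSinf_nn : 0 ≤ sInf S := by
    apply Real.sInf_nonneg
    rintro r ⟨D, _, rfl⟩
    exact Real.rpow_nonneg (Finset.sum_nonneg fun x _ => pow_nonneg (dSet_nonneg _ _) _) _
  nlinarith [mul_nonneg (sub_nonneg.mpr hα) (sub_nonneg.mpr hγ), hOpt_nn,
    mul_le_mul_of_nonneg_left step3 (le_trans zero_le_one hγ),
    mul_nonneg (mul_nonneg (le_trans zero_le_one hα) (le_trans zero_le_one hγ)) hOpt_nn,
    mul_le_mul_of_nonneg_right hγ hOpt_nn]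
end

section
/- Zero-query doubling k-center: the algorithm that starts with one point and, for k−1 rounds, adds for every current center the farthest point of its cluster, outputs exactly 2^{k-1} centers (since 1 + ∑_{i=0}^{k-2} 2^i = 2^{k-1}) and achieves max_{x∈X} d(x, C) ≤ 2·φ_OPT where φ_OPT is the optimal k-center cost. -/
/-- k-center cost of a set of centers -/
noncomputable def kCenterCost {X : Type*} [MetricSpace X] [Fintype X] [Nonempty X]
    (C : Finset X) : ℝ :=
  Finset.univ.sup' Finset.univ_nonempty (fun x => dSet x C)

/-- optimal k-center cost -/
noncomputable def kCenterOpt (X : Type*) [MetricSpace X] [Fintype X] [Nonempty X]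
    (k : ℕ) : ℝ :=
  sInf {r | ∃ C : Finset X, C.card = k ∧ r = kCenterCost C}


/-!
Fix an optimal solution `D` with `k` centers and send every point to a nearest center of `D`;
two points sent to the same center are within `2·φ_OPT`. Follow the set of optimal clusters
hit by the current centers. If some round hits no new cluster, then every farthest point `f c`
added in it shares a cluster with an old center `c'`, so every point `z`, whose nearest
center is `c`, satisfies `d(z, c) ≤ d(c, f c) ≤ d(f c, c') ≤ 2·φ_OPT`. Otherwise the number of
hit clusters grows in each of the `k - 1` rounds, so all `k` clusters are hit at the end and
every point shares a cluster with a center.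
-/

section

open Finset

lemma exists_lt_eq_succ_or_lt_card {α : Type*} {T : ℕ → Finset α} (hT : Monotone T)
    (h0 : (T 0).Nonempty) (n : ℕ) : (∃ i < n, T i = T (i + 1)) ∨ n < (T n).card := by
  induction n with
  | zero => exact Or.inr h0.card_pos
  | succ n ih =>
    rcases ih with ⟨i, hi, hTi⟩ | hn
    · exact Or.inl ⟨i, by omega, hTi⟩
    by_cases hTn : T n = T (n + 1)
    · exact Or.inl ⟨n, by omega, hTn⟩
    · have := card_lt_card (ssubset_of_subset_of_ne (hT (Nat.le_add_right n 1)) hTn)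
      exact Or.inr (by omega)

section Doubling

variable {α : Type*} [DecidableEq α] {C : ℕ → Finset α} {f : ℕ → α → α}
  (hstep : ∀ i, C (i + 1) = C i ∪ (C i).image (f i))
include hstep

lemma monotone_of_doubling : Monotone C :=
  monotone_nat_of_le_succ fun i => by rw [hstep]; exact subset_union_left

lemma card_le_two_pow_mul_of_doubling (i : ℕ) : (C i).card ≤ 2 ^ i * (C 0).card := by
  induction i with
  | zero => simp
  | succ i ih =>
    rw [hstep]
    calc (C i ∪ (C i).image (f i)).card ≤ (C i).card + (C i).card :=
          (card_union_le _ _).trans (Nat.add_le_add_left card_image_le _)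
      _ ≤ 2 ^ (i + 1) * (C 0).card := by rw [pow_succ]; nlinarith

end Doubling

section Metric

variable {X : Type*} [MetricSpace X]

lemma dSet_le_dist {x c : X} {C : Finset X} (hc : c ∈ C) : dSet x C ≤ dist x c :=
  csInf_le ⟨0, by rintro _ ⟨_, _, rfl⟩; exact dist_nonneg⟩ ⟨c, hc, rfl⟩

lemma exists_mem_dist_le_dSet (x : X) {C : Finset X} (hC : C.Nonempty) :
    ∃ c ∈ C, dist x c ≤ dSet x C := by
  obtain ⟨c, hc, hmin⟩ := exists_min_image C (dist x) hC
  refine ⟨c, hc, le_csInf ⟨_, c, hc, rfl⟩ ?_⟩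
  rintro _ ⟨c', hc', rfl⟩
  exact hmin c' hc'

/-- `F c` is a point farthest from `c` among the points having `c` as a nearest center in `S`. -/
def IsFarthestStep (S : Finset X) (F : X → X) : Prop :=
  ∀ c ∈ S, (∀ c' ∈ S, dist (F c) c ≤ dist (F c) c') ∧
    ∀ x : X, (∀ c' ∈ S, dist x c ≤ dist x c') → dist c x ≤ dist c (F c)

lemma IsFarthestStep.exists_dist_le {S : Finset X} {F : X → X} (hF : IsFarthestStep S F)
    (hS : S.Nonempty) {r : ℝ} (hr : ∀ c ∈ S, ∃ c' ∈ S, dist (F c) c' ≤ r) (z : X) :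
    ∃ c ∈ S, dist z c ≤ r := by
  obtain ⟨c, hc, hzc⟩ := exists_min_image S (dist z) hS
  obtain ⟨c', hc', hFc'⟩ := hr c hc
  refine ⟨c, hc, ?_⟩
  calc dist z c = dist c z := dist_comm _ _
    _ ≤ dist c (F c) := (hF c hc).2 z hzc
    _ = dist (F c) c := dist_comm _ _
    _ ≤ dist (F c) c' := (hF c hc).1 c' hc'
    _ ≤ r := hFc'

variable [Fintype X] [Nonempty X]

lemma dSet_le_kCenterCost (x : X) (C : Finset X) : dSet x C ≤ kCenterCost C :=
  le_sup' (fun y => dSet y C) (mem_univ x)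

lemma kCenterCost_le_of_forall_exists {C : Finset X} {r : ℝ}
    (h : ∀ x, ∃ c ∈ C, dist x c ≤ r) : kCenterCost C ≤ r :=
  sup'_le _ _ fun x _ =>
    let ⟨_, hc, hxc⟩ := h x
    (dSet_le_dist hc).trans hxc

lemma exists_assignment_dist_le_two_mul_kCenterCost {D : Finset X} (hD : D.Nonempty) :
    ∃ g : X → X, (∀ x, g x ∈ D) ∧ ∀ x y, g x = g y → dist x y ≤ 2 * kCenterCost D := by
  choose g hgD hg using fun x => exists_mem_dist_le_dSet x hD
  refine ⟨g, hgD, fun x y hxy => ?_⟩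
  calc dist x y ≤ dist x (g x) + dist y (g y) := hxy ▸ dist_triangle_right _ _ _
    _ ≤ kCenterCost D + kCenterCost D := add_le_add
      ((hg x).trans (dSet_le_kCenterCost x D)) ((hg y).trans (dSet_le_kCenterCost y D))
    _ = 2 * kCenterCost D := by ring

lemma le_kCenterOpt {k : ℕ} (hk : k ≤ Fintype.card X) {r : ℝ}
    (h : ∀ D : Finset X, D.card = k → r ≤ kCenterCost D) : r ≤ kCenterOpt X k := by
  obtain ⟨D, -, hD⟩ := exists_subset_card_eq (s := (univ : Finset X)) (by simpa using hk)
  exact le_csInf ⟨_, D, hD, rfl⟩ (by rintro _ ⟨D', hD', rfl⟩; exact h D' hD')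

lemma kCenterCost_le_two_mul_of_doubling [DecidableEq X] {C : ℕ → Finset X} {f : ℕ → X → X}
    (hstep : ∀ i, C (i + 1) = C i ∪ (C i).image (f i)) (h0 : (C 0).Nonempty)
    (hf : ∀ i, IsFarthestStep (C i) (f i)) {D : Finset X} {n : ℕ} (hD : D.card = n + 1) :
    kCenterCost (C n) ≤ 2 * kCenterCost D := by
  obtain ⟨g, hgD, hg⟩ := exists_assignment_dist_le_two_mul_kCenterCost (D := D)
    (card_pos.mp (by omega))
  have hmono := monotone_of_doubling hstep
  refine kCenterCost_le_of_forall_exists ?_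
  rcases exists_lt_eq_succ_or_lt_card (T := fun i => (C i).image g)
    (fun i j hij => image_subset_image (hmono hij)) (h0.image g) n with
    ⟨i, hi, hstall⟩ | hfull
  · intro z
    suffices ∀ c ∈ C i, ∃ c' ∈ C i, dist (f i c) c' ≤ 2 * kCenterCost D by
      obtain ⟨c, hc, hzc⟩ := (hf i).exists_dist_le (h0.mono (hmono i.zero_le)) this z
      exact ⟨c, hmono hi.le hc, hzc⟩
    intro c hc
    have hfc : f i c ∈ C (i + 1) := by
      rw [hstep]; exact mem_union_right _ (mem_image_of_mem _ hc)
    obtain ⟨c', hc', hgc'⟩ := mem_image.mp (hstall ▸ mem_image_of_mem g hfc)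
    exact ⟨c', hc', hg _ _ hgc'.symm⟩
  · have hcover : (C n).image g = D :=
      eq_of_subset_of_card_le (fun _ hy => by obtain ⟨x, -, rfl⟩ := mem_image.mp hy; exact hgD x)
        (by omega)
    intro z
    obtain ⟨c, hc, hgc⟩ := mem_image.mp (hcover ▸ hgD z)
    exact ⟨c, hc, hg z c hgc.symm⟩

end Metric

end

/-- Zero-query doubling `k`-center: the algorithm that starts with one point
and, for `k−1` rounds, simultaneously adds for every current center `c` the
farthest point `f i c` of `c`'s cluster (the cluster of `c` consists of the
points `x` with `dist x c ≤ dist x c'` for all current centers `c'`), outputs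
at most `2^{k-1}` centers and achieves `max_{x∈X} d(x,C) ≤ 2·φ_OPT`, where
`φ_OPT` is the optimal `k`-center cost. -/
theorem stmt_19 {X : Type*} [MetricSpace X] [Fintype X] [Nonempty X] [DecidableEq X]
    (k : ℕ) (hk : 1 ≤ k) (hX : 2 ^ (k - 1) ≤ Fintype.card X)
    (x0 : X) (C : ℕ → Finset X) (f : ℕ → X → X)
    (hC0 : C 0 = {x0})
    (hstep : ∀ i, C (i + 1) = C i ∪ (C i).image (f i))
    (hf : ∀ i, ∀ c ∈ C i,
      (∀ c' ∈ C i, dist (f i c) c ≤ dist (f i c) c') ∧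
      ∀ x : X, (∀ c' ∈ C i, dist x c ≤ dist x c') → dist c x ≤ dist c (f i c)) :
    (C (k - 1)).card ≤ 2 ^ (k - 1) ∧
      kCenterCost (C (k - 1)) ≤ 2 * kCenterOpt X k := by
  refine ⟨by simpa [hC0] using card_le_two_pow_mul_of_doubling hstep (k - 1), ?_⟩
  have hkX : k ≤ Fintype.card X := by have := @Nat.lt_two_pow_self (k - 1); omega
  have h0 : (C 0).Nonempty := hC0 ▸ Finset.singleton_nonempty x0
  have := le_kCenterOpt hkX (r := kCenterCost (C (k - 1)) / 2) fun D hD => by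
    have hD' : D.card = k - 1 + 1 := by omega
    linarith [kCenterCost_le_two_mul_of_doubling hstep h0 hf hD']
  linarith
end
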